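/- arXiv:1310.2081 — 5 statements merged into one kernel-verified Lean document; each statement's English description precedes it below -/
import Mathlib

section
/- Let n×(n-1) order matrix O have finite entries in ℕ ∪ {-∞} and suppose all Jacobi numbers J_i ≥ 0, i = 1,…,n. Then Σ_{i=1}^n J_i = Σ_{j=1}^{n-1} m_j, where m_j = max_i (o_{i,j} + J_i) with the max taken over i such that o_{i,j} ≠ -∞. -/
/-!
Fix a row `i₀` and a transversal `a₀` of maximal weight `J i₀`, i.e. a bijection from the
columns onto the other rows. The column maximum of `O i j + J i` is attained at the row `a₀ j`:
redirect column `j` of `a₀` to row `i` and add an optimal transversal for row `i`. Together these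
use the rows `a₀ j` and `i₀` once and every other row twice, so by Hall's theorem they can be
re-split column by column into a transversal avoiding `a₀ j` and one avoiding `i₀`, whence
`O i j + J i + J i₀ ≤ O (a₀ j) j + J (a₀ j) + J i₀`. Summing the column maxima gives
`∑ j, O (a₀ j) j + ∑ i ≠ i₀, J i = ∑ i, J i`.
-/

open Finset Function

variable {ι α β M : Type*}

section Sums

variable [Fintype ι] [AddCommMonoid β]

lemma sum_apply_update_add [DecidableEq ι] (f : ι → α → β) (a : ι → α) (j₀ : ι) (y : α) :
    ∑ j, f j (update a j₀ y j) + f j₀ (a j₀) = ∑ j, f j (a j) + f j₀ y := by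
  simp_rw [apply_update f a j₀ y, sum_update_of_mem (mem_univ j₀),
    sum_eq_add_sum_sdiff_singleton_of_mem (mem_univ j₀) fun j => f j (a j)]
  abel

lemma sum_add_sum_eq_of_sym2_eq {A B u v : ι → α} (h : ∀ j, s(A j, B j) = s(u j, v j))
    (f : ι → α → β) :
    ∑ j, f j (A j) + ∑ j, f j (B j) = ∑ j, f j (u j) + ∑ j, f j (v j) := by
  simp_rw [← sum_add_distrib]
  refine sum_congr rfl fun j _ => ?_
  rcases Sym2.eq_iff.1 (h j) with ⟨hA, hB⟩ | ⟨hA, hB⟩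
  · rw [hA, hB]
  · rw [hA, hB, add_comm]

end Sums

section Fibers

variable [Fintype ι] [DecidableEq α]

lemma bijOn_compl_singleton_iff_card_fiber {a : ι → α} {i : α} :
    Set.BijOn a Set.univ {i}ᶜ ↔ ∀ x, #{j | a j = x} = if x = i then 0 else 1 := by
  constructor
  · intro ha x
    split_ifs with hx
    · rw [card_eq_zero, filter_eq_empty_iff]
      exact fun j _ hj => ha.mapsTo (Set.mem_univ j) (hx ▸ hj)
    · obtain ⟨j, -, hj⟩ := ha.surjOn (Set.mem_compl_singleton_iff.2 hx)
      refine card_eq_one.2 ⟨j, eq_singleton_iff_unique_mem.2 ⟨by simpa using hj, ?_⟩⟩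
      intro j' hj'
      exact ha.injOn (Set.mem_univ _) (Set.mem_univ _) ((mem_filter.1 hj').2.trans hj.symm)
  · intro h
    refine ⟨fun j _ hj => ?_, fun j _ j' _ hjj' => ?_, fun x hx => ?_⟩
    · have := h (a j)
      rw [if_pos (Set.mem_singleton_iff.1 hj), card_eq_zero, filter_eq_empty_iff] at this
      exact this (mem_univ j) rfl
    · have hle : #{k | a k = a j} ≤ 1 := by
        rw [h (a j)]
        split_ifs <;> omega
      exact card_le_one.1 hle j (by simp) j' (by simp [hjj'])
    · have hpos : 0 < #{j | a j = x} := by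
        rw [h x, if_neg (Set.mem_compl_singleton_iff.1 hx)]
        exact one_pos
      obtain ⟨j, hj⟩ := card_pos.1 hpos
      exact ⟨j, Set.mem_univ j, (mem_filter.1 hj).2⟩

end Fibers

section Decomposition

variable [Fintype ι] [Fintype α] [DecidableEq α]

lemma bijOn_compl_singleton_of_injective {a : ι → α} {p : α} (hinj : Injective a)
    (hp : ∀ j, a j ≠ p) (hcard : Fintype.card α = Fintype.card ι + 1) :
    Set.BijOn a Set.univ {p}ᶜ := by
  have hsurj := surjOn_of_injOn_of_card_le (s := univ) (t := univ.erase p) a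
    (by simpa using hp) (by simpa using hinj)
    (by simp [card_erase_of_mem, hcard])
  exact ⟨fun j _ => hp j, hinj.injOn, by simpa [Set.compl_eq_univ_sdiff] using hsurj⟩

omit [Fintype α] in
lemma card_le_card_biUnion_erase_pair {u v : ι → α} {p : α}
    (hp : #{j | u j = p} + #{j | v j = p} ≤ 1)
    (h2 : ∀ x, #{j | u j = x} + #{j | v j = x} ≤ 2) (S : Finset ι) :
    #S ≤ #(S.biUnion fun j => ({u j, v j} : Finset α).erase p) := by
  set N := S.biUnion fun j => ({u j, v j} : Finset α).erase p
  have hpN : p ∉ N := by simp [N]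
  have hmem : ∀ j ∈ S, ∀ y ∈ ({u j, v j} : Finset α), y ∈ insert p N := by
    intro j hj y hy
    by_cases hyp : y = p
    · exact hyp ▸ mem_insert_self p N
    · exact mem_insert_of_mem (mem_biUnion.2 ⟨j, hj, mem_erase.2 ⟨hyp, hy⟩⟩)
  have hfib : #S + #S ≤ ∑ x ∈ insert p N, (#{j | u j = x} + #{j | v j = x}) := by
    rw [sum_add_distrib]
    nth_rewrite 1 [card_eq_sum_card_fiberwise fun j hj => hmem j hj (u j) (by simp)]
    rw [card_eq_sum_card_fiberwise fun j hj => hmem j hj (v j) (by simp)]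
    gcongr <;> exact subset_univ S
  have hbound : ∑ x ∈ insert p N, (#{j | u j = x} + #{j | v j = x}) ≤ 1 + 2 * #N := by
    rw [sum_insert hpN, mul_comm, ← smul_eq_mul, ← sum_const]
    exact add_le_add hp (sum_le_sum fun x _ => h2 x)
  omega

lemma exists_bijOn_compl_of_card_fiber_add {u v : ι → α} {p q : α}
    (h : ∀ x, #{j | u j = x} + #{j | v j = x} = (if x = p then 0 else 1) + if x = q then 0 else 1) :
    ∃ A B : ι → α, Set.BijOn A Set.univ {p}ᶜ ∧ Set.BijOn B Set.univ {q}ᶜ ∧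
      ∀ j, s(A j, B j) = s(u j, v j) := by
  have hcard : Fintype.card α = Fintype.card ι + 1 := by
    have hsum := sum_congr rfl fun x (_ : x ∈ univ) => h x
    simp only [sum_add_distrib, ← card_eq_sum_card_fiberwise (fun j _ => mem_univ (u j)),
      ← card_eq_sum_card_fiberwise (fun j _ => mem_univ (v j))] at hsum
    simp [sum_ite, filter_ne'] at hsum
    have := Fintype.card_pos_iff.2 ⟨p⟩
    omega
  obtain ⟨A, hAinj, hA⟩ := (all_card_le_biUnion_card_iff_existsInjective' _).1
    (card_le_card_biUnion_erase_pair (u := u) (v := v) (p := p)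
      (by have := h p; rw [if_pos rfl] at this; split_ifs at this <;> omega)
      (fun x => by have := h x; split_ifs at this <;> omega))
  have hAuv : ∀ j, A j = u j ∨ A j = v j := fun j => by simpa using (mem_erase.1 (hA j)).2
  set B := fun j => if A j = u j then v j else u j
  have hpair : ∀ j, s(A j, B j) = s(u j, v j) := by
    intro j
    by_cases hj : A j = u j
    · simp [B, hj]
    · simp [B, (hAuv j).resolve_left hj]
  have hAbij := bijOn_compl_singleton_of_injective hAinj (fun j => (mem_erase.1 (hA j)).1) hcard
  refine ⟨A, B, hAbij, bijOn_compl_singleton_iff_card_fiber.2 fun x => ?_, hpair⟩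
  have hswap : #{j | A j = x} + #{j | B j = x} = #{j | u j = x} + #{j | v j = x} := by
    simp only [card_filter]
    exact sum_add_sum_eq_of_sym2_eq hpair fun _ y => if y = x then 1 else 0
  have := bijOn_compl_singleton_iff_card_fiber.1 hAbij x
  rw [h x, this] at hswap
  omega

end Decomposition

section Transversals

variable [Fintype ι] [AddCommMonoid M]

def transversalSums (O : Matrix α ι M) (i : α) : Set M :=
  (fun a : ι → α => ∑ j, O (a j) j) '' {a | Set.BijOn a Set.univ {i}ᶜ}

variable [DecidableEq ι] [Fintype α] [DecidableEq α]

lemma add_le_add_of_isGreatest_transversalSums [PartialOrder M] [IsOrderedAddMonoid M]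
    {O : Matrix α ι M} {J : α → M} (hJ : ∀ i, IsGreatest (transversalSums O i) (J i))
    {i₀ : α} {a₀ : ι → α} (ha₀ : Set.BijOn a₀ Set.univ {i₀}ᶜ) (hw₀ : ∑ j, O (a₀ j) j = J i₀)
    (hc : AddLECancellable (J i₀)) (j₀ : ι) (i₁ : α) :
    O i₁ j₀ + J i₁ ≤ O (a₀ j₀) j₀ + J (a₀ j₀) := by
  obtain ⟨a₁, ha₁ : Set.BijOn a₁ Set.univ {i₁}ᶜ, hw₁ : ∑ j, O (a₁ j) j = J i₁⟩ := (hJ i₁).1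
  have hfib : ∀ x, #{j | update a₀ j₀ i₁ j = x} + #{j | a₁ j = x} =
      (if x = a₀ j₀ then 0 else 1) + if x = i₀ then 0 else 1 := by
    intro x
    have hupd := sum_apply_update_add (fun _ y => if y = x then 1 else 0) a₀ j₀ i₁
    simp only [← card_filter] at hupd
    rw [bijOn_compl_singleton_iff_card_fiber.1 ha₀ x] at hupd
    rw [bijOn_compl_singleton_iff_card_fiber.1 ha₁ x]
    have hr : a₀ j₀ ≠ i₀ := ha₀.mapsTo (Set.mem_univ j₀)
    grind
  obtain ⟨A, B, hA, hB, hAB⟩ := exists_bijOn_compl_of_card_fiber_add hfib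
  have hupd := sum_apply_update_add (fun j y => O y j) a₀ j₀ i₁
  have hswap := sum_add_sum_eq_of_sym2_eq hAB fun j y => O y j
  refine hc ?_
  calc J i₀ + (O i₁ j₀ + J i₁)
      = (∑ j, O (a₀ j) j + O i₁ j₀) + ∑ j, O (a₁ j) j := by rw [hw₀, hw₁]; abel
    _ = (∑ j, O (A j) j + ∑ j, O (B j) j) + O (a₀ j₀) j₀ := by rw [← hupd, hswap]; abel
    _ ≤ (J (a₀ j₀) + J i₀) + O (a₀ j₀) j₀ := by
        gcongr
        · exact (hJ _).2 ⟨A, hA, rfl⟩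
        · exact (hJ _).2 ⟨B, hB, rfl⟩
    _ = J i₀ + (O (a₀ j₀) j₀ + J (a₀ j₀)) := by abel

omit [DecidableEq ι] in
lemma sum_comp_eq_sum_erase_of_bijOn {β : Type*} [AddCommMonoid β] {a : ι → α} {i : α}
    (ha : Set.BijOn a Set.univ {i}ᶜ) (g : α → β) :
    ∑ j, g (a j) = ∑ x ∈ univ.erase i, g x :=
  sum_nbij a (by simpa using ha.mapsTo) (by simpa using ha.injOn)
    (by simpa [Set.compl_eq_univ_sdiff] using ha.surjOn) fun _ _ => rfl

theorem sum_eq_sum_sup_add_of_isGreatest [Nonempty α] [SemilatticeSup M] [OrderBot M]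
    [IsOrderedAddMonoid M] (O : Matrix α ι M) (J : α → M)
    (hJ : ∀ i, IsGreatest (transversalSums O i) (J i)) (hc : ∀ i, AddLECancellable (J i)) :
    ∑ i, J i = ∑ j, univ.sup fun i => O i j + J i := by
  obtain ⟨i₀⟩ := ‹Nonempty α›
  obtain ⟨a₀, ha₀ : Set.BijOn a₀ Set.univ {i₀}ᶜ, hw₀ : ∑ j, O (a₀ j) j = J i₀⟩ := (hJ i₀).1
  have hcol : ∀ j, (univ.sup fun i => O i j + J i) = O (a₀ j) j + J (a₀ j) := fun j =>
    le_antisymm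
      (Finset.sup_le fun i _ => add_le_add_of_isGreatest_transversalSums hJ ha₀ hw₀ (hc i₀) j i)
      (le_sup (f := fun i => O i j + J i) (mem_univ _))
  calc ∑ i, J i = J i₀ + ∑ i ∈ univ.erase i₀, J i := (add_sum_erase _ _ (mem_univ i₀)).symm
    _ = ∑ j, O (a₀ j) j + ∑ j, J (a₀ j) := by rw [hw₀, sum_comp_eq_sum_erase_of_bijOn ha₀ J]
    _ = ∑ j, univ.sup fun i => O i j + J i := by simp_rw [hcol, sum_add_distrib]

end Transversals

lemma isGreatest_range_univ_sup {β : Type*} [Fintype β] [Nonempty β] [LinearOrder M] [OrderBot M]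
    (f : β → M) : IsGreatest (Set.range f) (univ.sup f) :=
  ⟨(exists_mem_eq_sup univ univ_nonempty f).imp fun _ h => h.2.symm,
    Set.forall_mem_range.2 fun _ => le_sup (mem_univ _)⟩

lemma transversalSums_eq_range_sum_succAbove {m : ℕ} [AddCommMonoid M]
    (O : Matrix (Fin (m + 1)) (Fin m) M) (i : Fin (m + 1)) :
    transversalSums O i = Set.range fun σ : Equiv.Perm (Fin m) => ∑ k, O (i.succAbove k) (σ k) := by
  ext w
  constructor
  · rintro ⟨a, ha : Set.BijOn a Set.univ {i}ᶜ, rfl⟩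
    choose τ hτ using fun j => Fin.exists_succAbove_eq (ha.mapsTo (Set.mem_univ j))
    have hτinj : Injective τ := fun j j' h =>
      ha.injOn (Set.mem_univ j) (Set.mem_univ j') (by rw [← hτ j, ← hτ j', h])
    let σ := Equiv.ofBijective τ (Finite.injective_iff_bijective.1 hτinj)
    exact ⟨σ.symm, (Equiv.sum_comp σ _).symm.trans (by simp [σ, hτ])⟩
  · rintro ⟨σ, rfl⟩
    refine ⟨fun j => i.succAbove (σ.symm j), ⟨fun j _ => Fin.succAbove_ne i _,
      ((Fin.succAbove_right_injective).comp σ.symm.injective).injOn, fun x hx => ?_⟩, ?_⟩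
    · obtain ⟨k, rfl⟩ := Fin.exists_succAbove_eq hx
      exact ⟨σ k, Set.mem_univ _, by simp⟩
    · exact (Equiv.sum_comp σ _).symm.trans (by simp)

theorem sum_jacobi_eq_sum_colmax_general
    (m : ℕ) (O : Matrix (Fin (m+1)) (Fin m) (WithBot ℕ))
    (J : Fin (m+1) → WithBot ℕ)
    (hJ : ∀ i, J i =
      Finset.univ.sup (fun σ : Equiv.Perm (Fin m) => ∑ k, O (i.succAbove k) (σ k)))
    (hJ0 : ∀ i, (0 : WithBot ℕ) ≤ J i) :
    (∑ i, J i) = ∑ j, Finset.univ.sup (fun i => O i j + J i) := by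
  have hJmax : ∀ i, IsGreatest (transversalSums O i) (J i) := fun i => by
    rw [hJ i, transversalSums_eq_range_sum_succAbove]
    exact isGreatest_range_univ_sup _
  exact sum_eq_sum_sup_add_of_isGreatest O J hJmax fun i =>
    WithBot.addLECancellable_of_ne_bot (ne_bot_of_le_ne_bot WithBot.coe_ne_bot (hJ0 i))

/-- Li–Yuan–Gao, Lemma 5.6: let `O` be an `(m+1) × m` order matrix
with entries in `ℕ ∪ {-∞}` (modelled as `WithBot ℕ`, with `⊥` absorbing for `+`),
such that every column has a finite entry.  Let
`J i = max_{μ : {1,…,n}\{i} ≃ columns} Σ_j O_{j, μ(j)}` be the Jacobi numbers and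
suppose `J i ≥ 0` for all `i`.  Then `Σ_i J i = Σ_j m_j`, where
`m_j = max_i (O i j + J i)` (the max over all `i`; terms with `O i j = -∞`
contribute `-∞` and hence do not affect the max). -/
theorem sum_jacobi_eq_sum_colmax
    (m : ℕ) (O : Matrix (Fin (m+1)) (Fin m) (WithBot ℕ))
    (hcol : ∀ j : Fin m, ∃ i : Fin (m+1), O i j ≠ ⊥)
    (J : Fin (m+1) → WithBot ℕ)
    (hJ : ∀ i, J i =
      Finset.univ.sup (fun σ : Equiv.Perm (Fin m) => ∑ k, O (i.succAbove k) (σ k)))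
    (hJ0 : ∀ i, (0 : WithBot ℕ) ≤ J i) :
    (∑ i, J i) = ∑ j, Finset.univ.sup (fun i => O i j + J i) :=
  sum_jacobi_eq_sum_colmax_general m O J hJ hJ0
end

section
/- Let P be super essential and fix j ∈ {1,…,n-1} and I with S_j(f_I) ≠ ∅. Then there exists I' ≠ I with S_j(f_{I'}) ≠ ∅ such that o_{I,j} − γ_j ≤ J_{I'} − γ. -/
open Finset

/-- Laurent differential polynomials in the differential indeterminates
`u_1, …, u_p` over a coefficient ring `D`, modelled as finitely supported
families of coefficients indexed by Laurent exponent vectors on the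
variables `u_{j,k}` (`u_{j,k}` = the `k`-th derivative of `u_j`). -/
abbrev LaurentDiffPoly (D : Type*) [CommRing D] (p : ℕ) : Type _ :=
  ((Fin p × ℕ) →₀ ℤ) →₀ D

/-- differential support of `f` in `u_j`: the orders `k` of the derivatives
`u_{j,k}` effectively appearing in `f`. -/
noncomputable def SjF {D : Type*} [CommRing D] {p : ℕ} (j : Fin p)
    (f : LaurentDiffPoly D p) : Finset ℕ :=
  f.support.biUnion (fun e => (e.support.filter (fun v => v.1 = j)).image Prod.snd)

/-- the formal total derivative: `d` on coefficients, `u_{j,k} ↦ u_{j,k+1}`. -/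
noncomputable def laurentDeriv {D : Type*} [CommRing D] {p : ℕ} (d : D → D)
    (f : LaurentDiffPoly D p) : LaurentDiffPoly D p :=
  f.sum (fun e a =>
    Finsupp.single e (d a)
      + e.sum (fun v n =>
          Finsupp.single (e - Finsupp.single v 1 + Finsupp.single (v.1, v.2 + 1) 1) (n • a)))

/-- `ord(f, u_j) ∈ ℕ ∪ {-∞}`. -/
noncomputable def ordJ {D : Type*} [CommRing D] {p : ℕ} (j : Fin p)
    (f : LaurentDiffPoly D p) : WithBot ℕ := (SjF j f).max

/-- the Jacobi number `J_i` of the order matrix of the system with the `i`-th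
row removed: the max over its diagonals (bijections onto the columns). -/
noncomputable def jacobiNumber {D : Type*} [CommRing D] {p : ℕ}
    (f : Fin (p+1) → LaurentDiffPoly D p) (i : Fin (p+1)) : WithBot ℕ :=
  Finset.univ.sup (fun σ : Equiv.Perm (Fin p) => ∑ k, ordJ (σ k) (f (i.succAbove k)))

/-!
A diagonal `σ` of the order matrix with row `I` removed has finite entries, because `J_I` is
finite. Let `I'` be the row that `σ` pairs with column `j`. Exchanging the roles of `I` and `I'`
gives a diagonal of the matrix with row `I'` removed: it pairs `I` with `j` and keeps every other
entry of `σ`. Bounding that entry by `o_{I,j}` and every other one by the `γ` of its column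
gives `J_{I'} ≥ o_{I,j} + γ - γ_j`.
-/

theorem Fin.exists_perm_succAbove_eq_swap {n : ℕ} (i i' : Fin (n + 1)) :
    ∃ π : Equiv.Perm (Fin n), ∀ m, i'.succAbove (π m) = Equiv.swap i i' (i.succAbove m) := by
  have hne : ∀ m, Equiv.swap i i' (i.succAbove m) ≠ i' := fun m h =>
    i.succAbove_ne m (Equiv.swap_apply_eq_iff.1 h |>.trans (Equiv.swap_apply_right i i'))
  choose π hπ using fun m => Fin.exists_succAbove_eq (hne m)
  have hinj : Function.Injective π := fun a b hab =>
    Fin.succAbove_right_injective ((Equiv.swap i i').injective (by rw [← hπ a, ← hπ b, hab]))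
  exact ⟨Equiv.ofBijective π (Finite.injective_iff_bijective.mp hinj), hπ⟩

theorem Finset.coe_min'_le_max_of_subset {α : Type*} [LinearOrder α] {s t : Finset α}
    (hst : s ⊆ t) (hs : s.Nonempty) (ht : t.Nonempty) : (t.min' ht : WithBot α) ≤ s.max := by
  obtain ⟨x, hx⟩ := hs
  exact (WithBot.coe_le_coe.2 (t.min'_le x (hst hx))).trans (Finset.le_max hx)

section JacobiNumber

variable {D : Type*} [CommRing D] {p : ℕ}

theorem ordJ_eq_bot_iff {j : Fin p} {g : LaurentDiffPoly D p} : ordJ j g = ⊥ ↔ SjF j g = ∅ :=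
  Finset.max_eq_bot

theorem ordJ_eq_coe_sup {j : Fin p} {g : LaurentDiffPoly D p} (h : (SjF j g).Nonempty) :
    ordJ j g = ↑((SjF j g).sup id) := by
  rw [ordJ, Finset.max_eq_sup_coe]
  exact (Finset.coe_sup_of_nonempty h id).symm

theorem coe_min'_biUnion_le_ordJ {ι : Type*} [Fintype ι] (f : ι → LaurentDiffPoly D p)
    (j : Fin p) (h : (univ.biUnion fun i => SjF j (f i)).Nonempty) {i : ι}
    (hi : (SjF j (f i)).Nonempty) :
    (((univ.biUnion fun i => SjF j (f i)).min' h : ℕ) : WithBot ℕ) ≤ ordJ j (f i) :=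
  Finset.coe_min'_le_max_of_subset (subset_biUnion_of_mem (fun i => SjF j (f i)) (mem_univ i)) hi h

theorem exists_perm_forall_nonempty_of_jacobiNumber_ne_bot {f : Fin (p + 1) → LaurentDiffPoly D p}
    {i : Fin (p + 1)} (h : jacobiNumber f i ≠ ⊥) :
    ∃ σ : Equiv.Perm (Fin p), ∀ k, (SjF (σ k) (f (i.succAbove k))).Nonempty := by
  by_contra! hσ
  refine h ((Finset.sup_eq_bot_iff _ _).2 fun σ _ => WithBot.sum_eq_bot_iff.2 ?_)
  obtain ⟨k, hk⟩ := hσ σ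
  exact ⟨k, mem_univ k, ordJ_eq_bot_iff.2 hk⟩

theorem sum_ordJ_swap_le_jacobiNumber (f : Fin (p + 1) → LaurentDiffPoly D p)
    (σ : Equiv.Perm (Fin p)) (i i' : Fin (p + 1)) :
    ∑ m, ordJ (σ m) (f (Equiv.swap i i' (i.succAbove m))) ≤ jacobiNumber f i' := by
  obtain ⟨π, hπ⟩ := Fin.exists_perm_succAbove_eq_swap i i'
  refine le_of_eq_of_le ?_ (Finset.le_sup (mem_univ (π.symm.trans σ)))
  rw [← Equiv.sum_comp π (fun k => ordJ ((π.symm.trans σ) k) (f (i'.succAbove k)))]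
  simp [hπ]

end JacobiNumber

theorem exists_index_order_le_jacobi_general
    {D : Type*} [CommRing D] {p : ℕ}
    (f : Fin (p+1) → LaurentDiffPoly D p)
    (hP3 : ∀ j : Fin p, (Finset.univ.biUnion fun i => SjF j (f i)).Nonempty)
    (Jn : Fin (p+1) → ℕ) (hJn : ∀ i, (Jn i : WithBot ℕ) = jacobiNumber f i)
    (γ : Fin p → ℕ)
    (hγ : ∀ j, γ j = (Finset.univ.biUnion fun i => SjF j (f i)).min' (hP3 j))
    (γs : ℕ) (hγs : γs = ∑ j, γ j)
    (j : Fin p) (I : Fin (p+1)) (hI : (SjF j (f I)).Nonempty) :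
    ∃ I' : Fin (p+1), I' ≠ I ∧ (SjF j (f I')).Nonempty ∧
      ((((SjF j (f I)).sup id : ℕ) : ℤ) - (γ j : ℤ)) ≤ ((Jn I' : ℤ) - (γs : ℤ)) := by
  obtain ⟨σ, hσ⟩ :=
    exists_perm_forall_nonempty_of_jacobiNumber_ne_bot (f := f) (i := I)
      (by rw [← hJn I]; exact WithBot.coe_ne_bot)
  set k₀ := σ.symm j
  set I' := I.succAbove k₀
  have hσk₀ : σ k₀ = j := σ.apply_symm_apply j
  set b : Fin p → ℕ := Function.update (γ ∘ σ) k₀ ((SjF j (f I)).sup id)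
  have hb : ∀ m, (b m : WithBot ℕ) ≤ ordJ (σ m) (f (Equiv.swap I I' (I.succAbove m))) := by
    intro m
    rcases eq_or_ne m k₀ with rfl | hm
    · simp [b, I', hσk₀, ordJ_eq_coe_sup hI]
    · rw [Equiv.swap_apply_of_ne_of_ne (I.succAbove_ne m)
        (fun h => hm (Fin.succAbove_right_injective h)),
        show b m = γ (σ m) from Function.update_of_ne hm _ _, hγ]
      exact coe_min'_biUnion_le_ordJ f (σ m) _ (hσ m)
  have hb_le : ∑ m, b m ≤ Jn I' := by
    have := (Finset.sum_le_sum fun m _ => hb m).trans (sum_ordJ_swap_le_jacobiNumber f σ I I')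
    rw [← hJn] at this
    exact_mod_cast this
  have hb_sum : ∑ m, b m + γ j = (SjF j (f I)).sup id + γs := by
    rw [Finset.sum_update_of_mem (mem_univ k₀), hγs, ← Equiv.sum_comp σ γ,
      Finset.sum_eq_add_sum_sdiff_singleton_of_mem (mem_univ k₀)]
    simp only [Function.comp_apply, hσk₀]
    ring
  exact ⟨I', I.succAbove_ne k₀, hσk₀ ▸ hσ k₀, by omega⟩

/-- Lemma lem-I_Ip (1): if `P` is super essential, `j` a variable
index and `I` an index with `S_j(f_I) ≠ ∅`, then there exists `I' ≠ I` with
`S_j(f_{I'}) ≠ ∅` and `o_{I,j} − γ_j ≤ J_{I'} − γ`. -/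
theorem exists_index_order_le_jacobi
    {D : Type*} [CommRing D] [IsDomain D] [CharZero D] {p : ℕ}
    (f : Fin (p+1) → LaurentDiffPoly D p)
    (hP1 : ∀ i, ∃ j, (SjF j (f i)).Nonempty)
    (hP2 : Function.Injective f)
    (hP3 : ∀ j : Fin p, (Finset.univ.biUnion fun i => SjF j (f i)).Nonempty)
    (hsuper : ∀ i, (0 : WithBot ℕ) ≤ jacobiNumber f i)
    (Jn : Fin (p+1) → ℕ) (hJn : ∀ i, (Jn i : WithBot ℕ) = jacobiNumber f i)
    (γ : Fin p → ℕ)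
    (hγ : ∀ j, γ j = (Finset.univ.biUnion fun i => SjF j (f i)).min' (hP3 j))
    (γs : ℕ) (hγs : γs = ∑ j, γ j)
    (j : Fin p) (I : Fin (p+1)) (hI : (SjF j (f I)).Nonempty) :
    ∃ I' : Fin (p+1), I' ≠ I ∧ (SjF j (f I')).Nonempty ∧
      ((((SjF j (f I)).sup id : ℕ) : ℤ) - (γ j : ℤ)) ≤ ((Jn I' : ℤ) - (γs : ℤ)) :=
  exists_index_order_le_jacobi_general f hP3 Jn hJn γ hγ γs hγs j I hI
end

section
/- Let P be super essential, and let I, Ī be distinct indices with S_j(f_I) ≠ ∅ and S_j(f_Ī) ≠ ∅, such that Jac(O(P_{I,Ī})^j) = -∞ (the order matrix with rows I, Ī and column j removed has no finite diagonal). Then there exists I' ≠ Ī with S_j(f_{I'}) ≠ ∅ such that o_{Ī,j} − γ_j ≤ J_{I'} − γ, and moreover if I ≠ I' then o_{I',j} − γ_j ≤ J_I − γ. -/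
open Finset

/-!
Read the order matrix as a bipartite graph between rows and columns, with an edge where the
entry is finite. Super essentiality gives, for every row `X`, a perfect matching of the other
rows onto the columns; `Jac(O(P_{I,Ī})^j) = -∞` says that the rows `≠ I, Ī` cannot be matched
onto the columns `≠ j`, so Hall's condition fails for them at some set of rows `S`. Let `I'` be
the row matched to `j` by the matching avoiding `I`. If Hall's condition also failed for the
rows `≠ I', Ī` at some `T`, then submodularity of the size of the neighbourhood (with `j`
removed), together with Hall's condition at `S ∪ T` (which avoids `Ī`) and at `S ∩ T` (which
avoids `I` and `I'`), would give `|S| + |T| - 1 ≤ |S| + |T| - 2`. So the rows `≠ I', Ī` match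
onto the columns `≠ j`, and adding the edge `(Ī, j)` gives a diagonal bounding `J_{I'}`, while
the matching avoiding `I` gives one bounding `J_I`; every other entry in column `c` is at
least `γ_c`.
-/

namespace Finset

theorem card_biUnion_union_add_card_biUnion_inter_le {α β : Type*} [DecidableEq α]
    [DecidableEq β] (N : α → Finset β) (s t : Finset α) :
    #((s ∪ t).biUnion N) + #((s ∩ t).biUnion N) ≤ #(s.biUnion N) + #(t.biUnion N) := by
  rw [union_biUnion, ← card_union_add_card_inter (s.biUnion N)]
  gcongr
  exact subset_inter (biUnion_subset_biUnion_of_subset_left N inter_subset_left)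
    (biUnion_subset_biUnion_of_subset_left N inter_subset_right)

end Finset

section Hall

variable {α β : Type*} [DecidableEq β]

/-- Hall's marriage condition for the rows outside `K` of the bipartite graph in which row `r`
is adjacent to the columns in `N r`. -/
def HallOutside (N : α → Finset β) (K : Finset α) : Prop :=
  ∀ A : Finset α, Disjoint A K → #A ≤ #(A.biUnion N)

namespace HallOutside

variable {N : α → Finset β} {K : Finset α}

theorem of_injOn (G : α → β) (hG : Set.InjOn G (↑K)ᶜ) (hN : ∀ r ∉ K, G r ∈ N r) :
    HallOutside N K := by
  intro A hA
  have hAK : ∀ r ∈ A, r ∉ K := fun r hr hrK => disjoint_left.mp hA hr hrK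
  calc #A = #(A.image G) := (card_image_of_injOn (hG.mono fun r hr => hAK r hr)).symm
    _ ≤ #(A.biUnion N) := card_le_card fun c hc => by
      obtain ⟨r, hr, rfl⟩ := mem_image.mp hc
      exact mem_biUnion.mpr ⟨r, hr, hN r (hAK r hr)⟩

theorem erase_of_injOn [DecidableEq α] (G : α → β) (hG : Set.InjOn G (↑K)ᶜ)
    (hN : ∀ r ∉ K, G r ∈ N r) {r₀ : α} (hr₀ : r₀ ∉ K) :
    HallOutside (fun r => (N r).erase (G r₀)) (insert r₀ K) := by
  refine of_injOn G (hG.mono fun r hr => ?_) fun r hr => ?_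
  · simp_all
  · rw [mem_insert, not_or] at hr
    exact mem_erase.mpr ⟨fun h => hr.1 (hG hr.2 hr₀ h), hN r hr.2⟩

theorem exists_injOn [DecidableEq α] (h : HallOutside N K) (c : β) :
    ∃ G : α → β, Set.InjOn G (↑K)ᶜ ∧ (∀ r ∉ K, G r ∈ N r) ∧ ∀ r ∈ K, G r = c := by
  obtain ⟨g, hg, hgN⟩ := (all_card_le_biUnion_card_iff_exists_injective
    fun r : {r // r ∉ K} => N r).mp fun s => by
      simpa [map_eq_image, image_biUnion, card_image_of_injective _ Subtype.val_injective]
        using h (s.map (Function.Embedding.subtype _))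
          (disjoint_left.mpr fun r hr => by obtain ⟨r, -, rfl⟩ := mem_map.mp hr; exact r.2)
  refine ⟨fun r => if hr : r ∈ K then c else g ⟨r, hr⟩, fun r hr s hs hrs => ?_,
    fun r hr => by simpa [hr] using hgN ⟨r, hr⟩, fun r hr => by simp [hr]⟩
  simp only [Set.mem_compl_iff, mem_coe] at hr hs
  simpa [hr, hs] using congrArg Subtype.val (hg (by simpa [hr, hs] using hrs))

theorem exists_injOn_of_erase [DecidableEq α] {j : β} {X Y : α}
    (h : HallOutside (fun r => (N r).erase j) {X, Y}) (hY : j ∈ N Y) :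
    ∃ G : α → β, Set.InjOn G {X}ᶜ ∧ (∀ r ≠ X, G r ∈ N r) ∧ G Y = j := by
  obtain ⟨G, hG, hGN, hGK⟩ := h.exists_injOn j
  have hGY : G Y = j := hGK Y (by simp)
  have hGr : ∀ r ≠ X, r ≠ Y → G r ∈ (N r).erase j := fun r hrX hrY => hGN r (by simp [hrX, hrY])
  have hj : ∀ r ≠ X, G r = j → r = Y := fun r hrX hr =>
    by_contra fun hrY => (mem_erase.mp (hGr r hrX hrY)).1 hr
  refine ⟨G, fun r hr s hs hrs => ?_, fun r hrX => ?_, hGY⟩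
  · rw [Set.mem_compl_singleton_iff] at hr hs
    by_cases hrY : r = Y
    · exact hrY.trans (hj s hs (hrs.symm.trans (hrY ▸ hGY))).symm
    by_cases hsY : s = Y
    · exact (hj r hr (hrs.trans (hsY ▸ hGY))).trans hsY.symm
    exact hG (by simp [hr, hrY]) (by simp [hs, hsY]) hrs
  · by_cases hrY : r = Y
    · exact hrY ▸ hGY ▸ hY
    · exact (mem_erase.mp (hGr r hrX hrY)).2

theorem exchange [DecidableEq α] {j : β} {I I' Ib : α}
    (hI'I : HallOutside (fun r => (N r).erase j) {I', I}) (hIb : HallOutside N {Ib})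
    (hIIb : ¬HallOutside (fun r => (N r).erase j) {I, Ib}) :
    HallOutside (fun r => (N r).erase j) {I', Ib} := by
  intro T hT
  by_contra! hTlt
  obtain ⟨S, hSI, hSIb, hSlt⟩ : ∃ S : Finset α, I ∉ S ∧ Ib ∉ S ∧
      #(S.biUnion fun r => (N r).erase j) < #S := by
    simpa [HallOutside] using hIIb
  simp only [disjoint_insert_right, disjoint_singleton_right] at hT
  have hsub := card_biUnion_union_add_card_biUnion_inter_le (fun r => (N r).erase j) S T
  have hinter := hI'I (S ∩ T) (by simp [hSI, hT.1])
  have hunion := hIb (S ∪ T) (by simp [hSIb, hT.2])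
  have herase := pred_card_le_card_erase (s := (S ∪ T).biUnion N) (a := j)
  rw [erase_biUnion] at herase
  have := card_union_add_card_inter S T
  omega

end HallOutside

end Hall

theorem Fintype.card_sub_two_le_card_subtype_ne_and_ne {α : Type*} [Fintype α] [DecidableEq α]
    (a b : α) : Fintype.card α - 2 ≤ Fintype.card {x : α // x ≠ a ∧ x ≠ b} := by
  have hfilter : univ \ {a, b} = univ.filter fun x => x ≠ a ∧ x ≠ b := by ext; simp
  rw [Fintype.card_subtype, ← hfilter, ← card_univ]
  exact (Nat.sub_le_sub_left card_le_two _).trans (le_card_sdiff _ _)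

section OrderMatrix

variable {D : Type*} [CommRing D] {p : ℕ}

noncomputable def ordFiniteCols (f : Fin (p+1) → LaurentDiffPoly D p) (r : Fin (p+1)) :
    Finset (Fin p) :=
  univ.filter fun c => (SjF c (f r)).Nonempty

@[simp]
theorem mem_ordFiniteCols {f : Fin (p+1) → LaurentDiffPoly D p} {r : Fin (p+1)} {c : Fin p} :
    c ∈ ordFiniteCols f r ↔ (SjF c (f r)).Nonempty := by
  simp [ordFiniteCols]

theorem ordJ_ne_bot_iff {j : Fin p} {g : LaurentDiffPoly D p} :
    ordJ j g ≠ ⊥ ↔ (SjF j g).Nonempty := by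
  rw [ordJ, Ne, Finset.max_eq_bot]
  exact nonempty_iff_ne_empty.symm

theorem ordJ_eq_sup {j : Fin p} {g : LaurentDiffPoly D p} (h : (SjF j g).Nonempty) :
    ordJ j g = ((SjF j g).sup id : ℕ) := by
  rw [ordJ, max_eq_sup_coe, Nat.cast_withBot, coe_sup_of_nonempty h]
  rfl

theorem exists_perm_mem_ordFiniteCols {f : Fin (p+1) → LaurentDiffPoly D p} {X : Fin (p+1)}
    (hX : jacobiNumber f X ≠ ⊥) :
    ∃ π : Equiv.Perm (Fin p), ∀ k, π k ∈ ordFiniteCols f (X.succAbove k) := by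
  obtain ⟨π, -, hπ⟩ := exists_mem_eq_sup univ univ_nonempty
    fun π : Equiv.Perm (Fin p) => ∑ k, ordJ (π k) (f (X.succAbove k))
  rw [jacobiNumber, hπ, Ne, WithBot.sum_eq_bot_iff] at hX
  exact ⟨π, fun k => mem_ordFiniteCols.mpr (ordJ_ne_bot_iff.mp fun hk => hX ⟨k, mem_univ k, hk⟩)⟩

theorem exists_bijOn_mem_ordFiniteCols [NeZero p] {f : Fin (p+1) → LaurentDiffPoly D p}
    {X : Fin (p+1)} (hX : jacobiNumber f X ≠ ⊥) :
    ∃ G : Fin (p+1) → Fin p, Set.BijOn G {X}ᶜ Set.univ ∧ ∀ r ≠ X, G r ∈ ordFiniteCols f r := by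
  obtain ⟨π, hπ⟩ := exists_perm_mem_ordFiniteCols hX
  have hG : ∀ k, Fin.insertNth (α := fun _ => Fin p) X 0 π (X.succAbove k) = π k :=
    fun k => Fin.insertNth_apply_succAbove (α := fun _ => Fin p) X 0 π k
  refine ⟨Fin.insertNth X 0 π, ⟨Set.mapsTo_univ _ _, fun r hr s hs hrs => ?_, fun c _ => ?_⟩,
    fun r hr => ?_⟩
  · obtain ⟨k, rfl⟩ := Fin.exists_succAbove_eq hr
    obtain ⟨l, rfl⟩ := Fin.exists_succAbove_eq hs
    rw [hG, hG] at hrs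
    rw [π.injective hrs]
  · exact ⟨X.succAbove (π.symm c), X.succAbove_ne _, by rw [hG, π.apply_symm_apply]⟩
  · obtain ⟨k, rfl⟩ := Fin.exists_succAbove_eq hr
    rw [hG]
    exact hπ k

theorem bijective_comp_succAbove_of_injOn {n : ℕ} {X : Fin (n+1)} {G : Fin (n+1) → Fin n}
    (hG : Set.InjOn G {X}ᶜ) : Function.Bijective (G ∘ X.succAbove) :=
  Finite.injective_iff_bijective.mp fun a b h =>
    X.succAbove_right_injective (hG (X.succAbove_ne a) (X.succAbove_ne b) h)

theorem sum_ordJ_le_jacobiNumber (f : Fin (p+1) → LaurentDiffPoly D p) {X : Fin (p+1)}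
    {G : Fin (p+1) → Fin p} (hG : Set.InjOn G {X}ᶜ) :
    ∑ k, ordJ (G (X.succAbove k)) (f (X.succAbove k)) ≤ jacobiNumber f X := by
  let π : Equiv.Perm (Fin p) := Equiv.ofBijective _ (bijective_comp_succAbove_of_injOn hG)
  have hπ := le_sup (f := fun π : Equiv.Perm (Fin p) => ∑ k, ordJ (π k) (f (X.succAbove k)))
    (mem_univ π)
  exact hπ

theorem sup_add_sum_le_jacobiNumber (f : Fin (p+1) → LaurentDiffPoly D p) (γ : Fin p → ℕ)
    (hγ : ∀ c r, ∀ x ∈ SjF c (f r), γ c ≤ x) {X Y : Fin (p+1)} (hYX : Y ≠ X) {j : Fin p}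
    {G : Fin (p+1) → Fin p} (hG : Set.InjOn G {X}ᶜ) (hGN : ∀ r ≠ X, G r ∈ ordFiniteCols f r)
    (hGY : G Y = j) :
    (((SjF j (f Y)).sup id + ∑ c ∈ univ.erase j, γ c : ℕ) : WithBot ℕ) ≤ jacobiNumber f X := by
  set low : Fin p → ℕ := fun c => if c = j then (SjF j (f Y)).sup id else γ c
  have hlow : ∀ k, (low (G (X.succAbove k)) : WithBot ℕ)
      ≤ ordJ (G (X.succAbove k)) (f (X.succAbove k)) := by
    intro k
    have hne := mem_ordFiniteCols.mp (hGN _ (X.succAbove_ne k))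
    by_cases hk : G (X.succAbove k) = j
    · have hkY : X.succAbove k = Y := hG (X.succAbove_ne k) hYX (hk.trans hGY.symm)
      rw [hkY, hGY] at hne ⊢
      simpa only [low, if_pos rfl] using (ordJ_eq_sup hne).ge
    · obtain ⟨x, hx⟩ := hne
      simp only [low, hk, if_false]
      exact (Nat.cast_le.mpr (hγ _ _ x hx)).trans (Nat.cast_withBot x ▸ le_max hx)
  have hsplit : ∑ c, low c = (SjF j (f Y)).sup id + ∑ c ∈ univ.erase j, γ c := by
    rw [← add_sum_erase _ _ (mem_univ j)]
    congr 1
    · simp [low]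
    · exact sum_congr rfl fun c hc => by simp [low, ne_of_mem_erase hc]
  calc (((SjF j (f Y)).sup id + ∑ c ∈ univ.erase j, γ c : ℕ) : WithBot ℕ)
      = ∑ k, (low (G (X.succAbove k)) : WithBot ℕ) := by
        rw [← hsplit, ← (bijective_comp_succAbove_of_injOn hG).sum_comp low, Nat.cast_sum]
        rfl
    _ ≤ ∑ k, ordJ (G (X.succAbove k)) (f (X.succAbove k)) := sum_le_sum fun k _ => hlow k
    _ ≤ jacobiNumber f X := sum_ordJ_le_jacobiNumber f hG

theorem not_hallOutside_of_sup_eq_bot {f : Fin (p+1) → LaurentDiffPoly D p} {j : Fin p}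
    {I Ib : Fin (p+1)}
    (h : univ.sup (fun e : ({l : Fin (p+1) // l ≠ I ∧ l ≠ Ib} ≃ {c : Fin p // c ≠ j}) =>
      ∑ l : {l : Fin (p+1) // l ≠ I ∧ l ≠ Ib}, ordJ (e l).1 (f l.1)) = ⊥) :
    ¬HallOutside (fun r => (ordFiniteCols f r).erase j) {I, Ib} := by
  intro hall
  obtain ⟨G, hG, hGN, -⟩ := hall.exists_injOn j
  have hout : ∀ l : {l : Fin (p+1) // l ≠ I ∧ l ≠ Ib}, l.1 ∉ ({I, Ib} : Finset _) := fun l => by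
    simp [l.2.1, l.2.2]
  let e₀ : {l : Fin (p+1) // l ≠ I ∧ l ≠ Ib} → {c : Fin p // c ≠ j} :=
    fun l => ⟨G l, (mem_erase.mp (hGN l (hout l))).1⟩
  have he₀ : Function.Injective e₀ := fun a b hab =>
    Subtype.ext (hG (hout a) (hout b) (congrArg Subtype.val hab))
  have hcard :
      Fintype.card {c : Fin p // c ≠ j} ≤ Fintype.card {l : Fin (p+1) // l ≠ I ∧ l ≠ Ib} := by
    simpa [Fintype.card_subtype_compl] using Fintype.card_sub_two_le_card_subtype_ne_and_ne I Ib
  let e := Equiv.ofBijective e₀ ((Fintype.bijective_iff_injective_and_card e₀).mpr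
    ⟨he₀, le_antisymm (Fintype.card_le_of_injective e₀ he₀) hcard⟩)
  have hfin : ∑ l, ordJ (e l).1 (f l.1) ≠ ⊥ := by
    rw [Ne, WithBot.sum_eq_bot_iff]
    rintro ⟨l, -, hl⟩
    exact ordJ_ne_bot_iff.mpr (mem_ordFiniteCols.mp (mem_erase.mp (hGN l (hout l))).2) hl
  refine hfin (le_bot_iff.mp (h ▸ ?_))
  exact le_sup (f := fun e : ({l : Fin (p+1) // l ≠ I ∧ l ≠ Ib} ≃ {c : Fin p // c ≠ j}) =>
    ∑ l : {l : Fin (p+1) // l ≠ I ∧ l ≠ Ib}, ordJ (e l).1 (f l.1)) (mem_univ e)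

end OrderMatrix

theorem exists_index_order_le_jacobi_two_rows_general
    {D : Type*} [CommRing D] {p : ℕ}
    (f : Fin (p+1) → LaurentDiffPoly D p)
    (hP3 : ∀ j : Fin p, (Finset.univ.biUnion fun i => SjF j (f i)).Nonempty)
    (Jn : Fin (p+1) → ℕ) (hJn : ∀ i, (Jn i : WithBot ℕ) = jacobiNumber f i)
    (γ : Fin p → ℕ)
    (hγ : ∀ j, γ j = (Finset.univ.biUnion fun i => SjF j (f i)).min' (hP3 j))
    (γs : ℕ) (hγs : γs = ∑ j, γ j)
    (j : Fin p) (I Ib : Fin (p+1))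
    (hIb : (SjF j (f Ib)).Nonempty)
    (hJac2 :
      Finset.univ.sup
        (fun e : ({l : Fin (p+1) // l ≠ I ∧ l ≠ Ib} ≃ {c : Fin p // c ≠ j}) =>
          ∑ l : {l : Fin (p+1) // l ≠ I ∧ l ≠ Ib}, ordJ (e l).1 (f l.1)) = ⊥) :
    ∃ I' : Fin (p+1), I' ≠ Ib ∧ (SjF j (f I')).Nonempty ∧
      ((((SjF j (f Ib)).sup id : ℕ) : ℤ) - (γ j : ℤ)) ≤ ((Jn I' : ℤ) - (γs : ℤ)) ∧
      (I ≠ I' →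
        ((((SjF j (f I')).sup id : ℕ) : ℤ) - (γ j : ℤ)) ≤ ((Jn I : ℤ) - (γs : ℤ))) := by
  classical
  have : NeZero p := ⟨j.pos.ne'⟩
  have hγle : ∀ c r, ∀ x ∈ SjF c (f r), γ c ≤ x := fun c r x hx =>
    hγ c ▸ min'_le _ _ (mem_biUnion.mpr ⟨r, mem_univ r, hx⟩)
  have hfin : ∀ X, jacobiNumber f X ≠ ⊥ := fun X => hJn X ▸ WithBot.coe_ne_bot
  obtain ⟨σ, hσ, hσN⟩ := exists_bijOn_mem_ordFiniteCols (hfin I)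
  obtain ⟨ρ, hρ, hρN⟩ := exists_bijOn_mem_ordFiniteCols (hfin Ib)
  obtain ⟨I', hI'I, hσI'⟩ := hσ.surjOn (Set.mem_univ j)
  rw [Set.mem_compl_singleton_iff] at hI'I
  have hallσ := HallOutside.erase_of_injOn (N := ordFiniteCols f) (K := {I}) σ
    (by simpa using hσ.injOn) (by simpa using hσN) (r₀ := I') (by simpa using hI'I)
  rw [hσI'] at hallσ
  have hallρ : HallOutside (ordFiniteCols f) {Ib} :=
    HallOutside.of_injOn ρ (by simpa using hρ.injOn) (by simpa using hρN)
  have hS := not_hallOutside_of_sup_eq_bot hJac2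
  have hI'Ib : I' ≠ Ib := by
    rintro rfl
    exact hS (by rwa [pair_comm])
  obtain ⟨G, hG, hGN, hGIb⟩ := (hallσ.exchange hallρ hS).exists_injOn_of_erase
    (mem_ordFiniteCols.mpr hIb)
  have h₁ := sup_add_sum_le_jacobiNumber f γ hγle hI'Ib.symm hG hGN hGIb
  have h₂ := sup_add_sum_le_jacobiNumber f γ hγle hI'I hσ.injOn hσN hσI'
  rw [← hJn, Nat.cast_le] at h₁ h₂
  have hγs' : γs = γ j + ∑ c ∈ univ.erase j, γ c := hγs ▸ (add_sum_erase _ _ (mem_univ j)).symm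
  exact ⟨I', hI'Ib, mem_ordFiniteCols.mp (hσI' ▸ hσN I' hI'I), by omega, fun _ => by omega⟩

/-- Lemma lem-I_Ip (2): let `P` be super essential and `I ≠ Ī`
with `S_j(f_I) ≠ ∅`, `S_j(f_Ī) ≠ ∅`, such that the order matrix with rows
`I, Ī` and column `j` removed has no finite diagonal
(`Jac(O(P_{I,Ī})^j) = -∞`).  Then there is `I' ≠ Ī` with `S_j(f_{I'}) ≠ ∅`,
`o_{Ī,j} − γ_j ≤ J_{I'} − γ`, and if moreover `I ≠ I'` then
`o_{I',j} − γ_j ≤ J_I − γ`. -/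
theorem exists_index_order_le_jacobi_two_rows
    {D : Type*} [CommRing D] [IsDomain D] [CharZero D] {p : ℕ}
    (f : Fin (p+1) → LaurentDiffPoly D p)
    (hP1 : ∀ i, ∃ j, (SjF j (f i)).Nonempty)
    (hP2 : Function.Injective f)
    (hP3 : ∀ j : Fin p, (Finset.univ.biUnion fun i => SjF j (f i)).Nonempty)
    (hsuper : ∀ i, (0 : WithBot ℕ) ≤ jacobiNumber f i)
    (Jn : Fin (p+1) → ℕ) (hJn : ∀ i, (Jn i : WithBot ℕ) = jacobiNumber f i)
    (γ : Fin p → ℕ)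
    (hγ : ∀ j, γ j = (Finset.univ.biUnion fun i => SjF j (f i)).min' (hP3 j))
    (γs : ℕ) (hγs : γs = ∑ j, γ j)
    (j : Fin p) (I Ib : Fin (p+1)) (hII : I ≠ Ib)
    (hI : (SjF j (f I)).Nonempty) (hIb : (SjF j (f Ib)).Nonempty)
    (hJac2 :
      Finset.univ.sup
        (fun e : ({l : Fin (p+1) // l ≠ I ∧ l ≠ Ib} ≃ {c : Fin p // c ≠ j}) =>
          ∑ l : {l : Fin (p+1) // l ≠ I ∧ l ≠ Ib}, ordJ (e l).1 (f l.1)) = ⊥) :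
    ∃ I' : Fin (p+1), I' ≠ Ib ∧ (SjF j (f I')).Nonempty ∧
      ((((SjF j (f Ib)).sup id : ℕ) : ℤ) - (γ j : ℤ)) ≤ ((Jn I' : ℤ) - (γs : ℤ)) ∧
      (I ≠ I' →
        ((((SjF j (f I')).sup id : ℕ) : ℤ) - (γ j : ℤ)) ≤ ((Jn I : ℤ) - (γs : ℤ))) :=
  exists_index_order_le_jacobi_two_rows_general f hP3 Jn hJn γ hγ γs hγs j I Ib hIb hJac2
end

section
/- Let S = {P_1,…,P_L} be generic sparse Laurent polynomials as above, with P_l = c_l T_l + Σ_{h=1}^{h_l} c_{l,h} T_{l,h} for monomials T_l, T_{l,h} in y_1^{±1},…,y_{L-1}^{±1}, all coefficients algebraically independent over ℚ. Set ε_l := −Σ_h c_{l,h} T_{l,h} / T_l in the field ℚ(c_{l,h}, y_j). Then the elimination ideal (S) ∩ ℚ[C], where (S) is generated by the P_l in ℚ[C][y^{±}], is a prime ideal, and a polynomial G ∈ ℚ[C] lies in it if and only if G vanishes when each c_l is replaced by ε_l (with the other coefficients c_{l,h} left as themselves). -/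
open Finset

/-- coefficient ring `ℚ[C]`, `C = {c_l : l} ∪ {c_{l,h} : l,h}`. -/
abbrev CRing (L : ℕ) (h : Fin L → ℕ) : Type :=
  MvPolynomial (Fin L ⊕ (Σ l : Fin L, Fin (h l))) ℚ

/-- the rational function field `ℚ(c_{l,h}, y_j)`. -/
abbrev RatFld (L m : ℕ) (h : Fin L → ℕ) : Type :=
  FractionRing (MvPolynomial ((Σ l : Fin L, Fin (h l)) ⊕ Fin m) ℚ)

/-! Modulo the `P_l`, each leader `c_l` is congruent to
`ε_l = -y^{-T_l} Σ_h c_{l,h} y^{T_{l,h}}`, which lies in the Laurent ring `B[y^±]` over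
`B = ℚ[c_{l,h}]`; hence every `G ∈ ℚ[C]` is congruent to `G(ε) ∈ B[y^±]`. Conversely the
substitution `c_l ↦ ε_l` extends to a retraction of `ℚ[C][y^±]` onto `B[y^±]` killing the `P_l`,
so `(S) ∩ ℚ[C]` is the kernel of `G ↦ G(ε)`. Finally `B[y^±]` embeds into `ℚ(c_{l,h}, y)`:
multiplying by a monomial moves any Laurent polynomial into `B[y] ≅ ℚ[c_{l,h}, y]`. Being the
kernel of a map to a field, the elimination ideal is prime. -/

open MvPolynomial AddMonoidAlgebra

noncomputable section

namespace MvPolynomial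

variable {σ S K : Type*} [CommRing S] [CommRing K]

def toLaurent : MvPolynomial σ S →+* AddMonoidAlgebra S (σ →₀ ℤ) :=
  mapDomainRingHom S (Finsupp.mapRange.addMonoidHom (Nat.castAddMonoidHom ℤ))

lemma toLaurent_monomial (n : σ →₀ ℕ) (s : S) :
    toLaurent (monomial n s) = single (n.mapRange (↑) Nat.cast_zero) s := by
  simp [toLaurent, monomial]

lemma isUnit_toLaurent_monomial_one (n : σ →₀ ℕ) : IsUnit (toLaurent (monomial n (1 : S))) := by
  rw [toLaurent_monomial]
  exact (Group.isUnit (Multiplicative.ofAdd _)).map (of S (σ →₀ ℤ))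

theorem exists_toLaurent_eq_mul (x : AddMonoidAlgebra S (σ →₀ ℤ)) :
    ∃ (n : σ →₀ ℕ) (p : MvPolynomial σ S), toLaurent p = toLaurent (monomial n 1) * x := by
  induction x using AddMonoidAlgebra.induction_linear with
  | zero => exact ⟨0, 0, by simp⟩
  | add x y hx hy =>
    obtain ⟨n₁, p₁, hp₁⟩ := hx
    obtain ⟨n₂, p₂, hp₂⟩ := hy
    refine ⟨n₁ + n₂, p₁ * monomial n₂ 1 + p₂ * monomial n₁ 1, ?_⟩
    have hmon : monomial (n₁ + n₂) (1 : S) = monomial n₁ 1 * monomial n₂ 1 := by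
      rw [monomial_mul, mul_one]
    simp only [map_add, map_mul, hp₁, hp₂, hmon]
    ring
  | single e s =>
    refine ⟨e.mapRange (fun z => (-z).toNat) (by simp),
      monomial (e.mapRange Int.toNat (by simp)) s, ?_⟩
    rw [toLaurent_monomial, toLaurent_monomial, single_mul_single, one_mul]
    congr 1
    ext j
    simp only [Finsupp.mapRange_apply, Finsupp.coe_add, Pi.add_apply]
    omega

lemma liftNCRingHom_comp_toLaurent (f : S →+* K) (g : Multiplicative (σ →₀ ℤ) →* K) :
    (liftNCRingHom f g fun _ _ => .all _ _).comp toLaurent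
      = eval₂Hom f fun j => g (.ofAdd (Finsupp.single j 1)) := by
  refine MvPolynomial.ringHom_ext (fun s => ?_) (fun j => ?_)
  · simp [← monomial_zero', toLaurent_monomial]
  · simp [X, toLaurent_monomial]

theorem liftNCRingHom_injective_of_eval₂Hom_injective (f : S →+* K)
    (g : Multiplicative (σ →₀ ℤ) →* K)
    (hfg : Function.Injective (eval₂Hom f fun j => g (.ofAdd (Finsupp.single j 1)))) :
    Function.Injective (liftNCRingHom f g fun _ _ => .all _ _) := by
  refine (injective_iff_map_eq_zero _).mpr fun x hx => ?_
  obtain ⟨n, p, hp⟩ := exists_toLaurent_eq_mul x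
  have hp0 : p = 0 := hfg <| by
    rw [← liftNCRingHom_comp_toLaurent, RingHom.comp_apply, hp, map_mul, hx, mul_zero, map_zero]
  rwa [hp0, map_zero, eq_comm, (isUnit_toLaurent_monomial_one n).mul_right_eq_zero] at hp

end MvPolynomial

section GenericZero

variable {R κ ι M : Type*} [CommRing R] [AddCommGroup M]
  (T : κ → M) (Q : κ → AddMonoidAlgebra (MvPolynomial ι R) M)

/-- `c_l ↦ -y^{-T l} Q_l`, the root of `y^{T l} c_l + Q_l`; the remaining variables are fixed. -/
def genericZero : MvPolynomial (κ ⊕ ι) R →ₐ[R] AddMonoidAlgebra (MvPolynomial ι R) M :=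
  aeval (Sum.elim (fun l => -(single (-T l) 1 * Q l)) (fun i => single 0 (X i)))

lemma genericZero_rename_inr (b : MvPolynomial ι R) :
    genericZero T Q (rename Sum.inr b) = single 0 b := by
  rw [genericZero, aeval_rename]
  change _ = IsScalarTower.toAlgHom R (MvPolynomial ι R) _ b
  congr 1
  exact MvPolynomial.algHom_ext fun i => by simp

def genericZeroLaurent :
    AddMonoidAlgebra (MvPolynomial (κ ⊕ ι) R) M →+* AddMonoidAlgebra (MvPolynomial ι R) M :=
  liftNCRingHom (genericZero T Q).toRingHom (of _ M) fun _ _ => .all _ _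

lemma genericZeroLaurent_algebraMap (G : MvPolynomial (κ ⊕ ι) R) :
    genericZeroLaurent T Q (algebraMap _ _ G) = genericZero T Q G := by
  simp [genericZeroLaurent, ← AddMonoidAlgebra.one_def]

lemma genericZeroLaurent_mapAlgHom_rename (b : AddMonoidAlgebra (MvPolynomial ι R) M) :
    genericZeroLaurent T Q (AddMonoidAlgebra.mapAlgHom M (rename Sum.inr) b) = b := by
  change (genericZeroLaurent T Q).comp (AddMonoidAlgebra.mapAlgHom M (rename Sum.inr)).toRingHom b
    = RingHom.id _ b
  congr 1
  refine AddMonoidAlgebra.ringHom_ext (fun b => ?_) (fun e => ?_)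
  · simp [genericZeroLaurent, genericZero_rename_inr]
  · simp [genericZeroLaurent]

variable {T Q} {P : κ → AddMonoidAlgebra (MvPolynomial (κ ⊕ ι) R) M}
  (hP : ∀ l, P l = single (T l) (X (Sum.inl l))
    + AddMonoidAlgebra.mapAlgHom M (rename Sum.inr) (Q l))
include hP

lemma genericZeroLaurent_eq_zero (l : κ) : genericZeroLaurent T Q (P l) = 0 := by
  rw [hP, map_add, genericZeroLaurent_mapAlgHom_rename]
  simp only [genericZeroLaurent, liftNCRingHom_single, AlgHom.toRingHom_eq_coe, RingHom.coe_coe,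
    genericZero, aeval_X, Sum.elim_inl, of_apply]
  have hunit : single (-T l) (1 : MvPolynomial ι R) * single (T l) 1 = 1 := by
    rw [single_mul_single, neg_add_cancel, one_mul]
    rfl
  rw [toAdd_ofAdd]
  linear_combination (-Q l) * hunit

lemma algebraMap_sub_genericZero_mem_span (G : MvPolynomial (κ ⊕ ι) R) :
    algebraMap _ _ G - AddMonoidAlgebra.mapAlgHom M (rename Sum.inr) (genericZero T Q G)
      ∈ Ideal.span (Set.range P) := by
  rw [← Ideal.Quotient.mk_eq_mk_iff_sub_mem]
  change (Ideal.Quotient.mkₐ R _).comp (IsScalarTower.toAlgHom R _ _) G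
    = (Ideal.Quotient.mkₐ R _).comp
        ((AddMonoidAlgebra.mapAlgHom M (rename Sum.inr)).comp (genericZero T Q)) G
  congr 1
  refine MvPolynomial.algHom_ext fun i => ?_
  rcases i with l | i
  · have hmem : single (-T l) 1 * P l ∈ Ideal.span (Set.range P) :=
      Ideal.mul_mem_left _ _ (Ideal.subset_span ⟨l, rfl⟩)
    simp only [AlgHom.comp_apply, Ideal.Quotient.mkₐ_eq_mk, Ideal.Quotient.mk_eq_mk_iff_sub_mem]
    convert hmem using 1
    simp [hP, genericZero, mul_add]
  · simp [genericZero]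

theorem comap_span_eq_ker_genericZero :
    Ideal.comap (algebraMap _ _) (Ideal.span (Set.range P)) = RingHom.ker (genericZero T Q) := by
  refine le_antisymm (fun G hG => ?_) (fun G hG => ?_)
  · have hker : Ideal.span (Set.range P) ≤ RingHom.ker (genericZeroLaurent T Q) :=
      Ideal.span_le.mpr <| Set.range_subset_iff.mpr (genericZeroLaurent_eq_zero hP)
    have hG' := hker (Ideal.mem_comap.mp hG)
    rwa [RingHom.mem_ker, genericZeroLaurent_algebraMap] at hG'
  · simpa [(RingHom.mem_ker).mp hG] using algebraMap_sub_genericZero_mem_span hP G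

end GenericZero

section LaurentEmbedding

variable {R ι σ K : Type*} [CommRing R]

lemma eval₂Hom_rename_inl_injective [CommRing K] {ψ : MvPolynomial (ι ⊕ σ) R →+* K}
    (hψ : Function.Injective ψ) :
    Function.Injective
      (eval₂Hom (ψ.comp (rename Sum.inl).toRingHom) fun j => ψ (X (Sum.inr j))) := by
  have : eval₂Hom (ψ.comp (rename Sum.inl).toRingHom) (fun j => ψ (X (Sum.inr j)))
      = ψ.comp ((rename Sum.swap).toRingHom.comp (sumRingEquiv R σ ι).symm.toRingHom) := by
    ext <;> simp
  rw [this]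
  exact hψ.comp ((rename_injective _ Sum.swap_leftInverse.injective).comp
    (sumRingEquiv R σ ι).symm.injective)

variable [Field K]

def laurentMonomialHom [Fintype σ] (y : σ → K) (hy : ∀ j, y j ≠ 0) :
    Multiplicative (σ →₀ ℤ) →* K where
  toFun e := ∏ j, y j ^ e.toAdd j
  map_one' := by simp
  map_mul' e f := by
    simp only [toAdd_mul, Finsupp.coe_add, Pi.add_apply, ← Finset.prod_mul_distrib]
    exact Finset.prod_congr rfl fun j _ => zpow_add₀ (hy j) _ _

lemma laurentMonomialHom_single [Fintype σ] (y : σ → K) (hy : ∀ j, y j ≠ 0) (j : σ) :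
    laurentMonomialHom y hy (.ofAdd (Finsupp.single j 1)) = y j := by
  classical
  simp [laurentMonomialHom, Finsupp.single_apply]

variable {ψ : MvPolynomial (ι ⊕ σ) R →+* K} (hψ : Function.Injective ψ)
include hψ

variable [Nontrivial R]

lemma map_X_inr_ne_zero (j : σ) : ψ (X (Sum.inr j)) ≠ 0 :=
  (map_ne_zero_iff ψ hψ).mpr (X_ne_zero _)

variable [Fintype σ]

def laurentEmbedding : AddMonoidAlgebra (MvPolynomial ι R) (σ →₀ ℤ) →+* K :=
  liftNCRingHom (ψ.comp (rename Sum.inl).toRingHom)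
    (laurentMonomialHom _ (map_X_inr_ne_zero hψ)) fun _ _ => .all _ _

theorem laurentEmbedding_injective : Function.Injective (laurentEmbedding hψ) := by
  refine MvPolynomial.liftNCRingHom_injective_of_eval₂Hom_injective _ _ ?_
  simpa only [laurentMonomialHom_single] using eval₂Hom_rename_inl_injective hψ

end LaurentEmbedding

section SparseGenericZero

variable {R κ σ K : Type*} {H : κ → Type*} [CommRing R] [Nontrivial R] [Field K] [Fintype σ]
  [∀ l, Fintype (H l)]

def sparseTail (T' : (l : κ) → H l → σ →₀ ℤ) (l : κ) :
    AddMonoidAlgebra (MvPolynomial (Σ l, H l) R) (σ →₀ ℤ) :=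
  ∑ k, single (T' l k) (X ⟨l, k⟩)

lemma laurentEmbedding_comp_genericZero {ψ : MvPolynomial ((Σ l, H l) ⊕ σ) R →+* K}
    (hψ : Function.Injective ψ) (T : κ → σ →₀ ℤ) (T' : (l : κ) → H l → σ →₀ ℤ) :
    (laurentEmbedding hψ).comp (genericZero T (sparseTail T')).toRingHom
      = eval₂Hom (ψ.comp C) (Sum.elim
          (fun l => -∑ k, ψ (X (Sum.inl ⟨l, k⟩)) * ∏ j, ψ (X (Sum.inr j)) ^ (T' l k - T l) j)
          (fun c => ψ (X (Sum.inl c)))) := by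
  refine MvPolynomial.ringHom_ext (fun r => ?_) (fun i => ?_)
  · simp [laurentEmbedding, genericZero]
  rcases i with l | c
  · simp [laurentEmbedding, genericZero, sparseTail, Finset.mul_sum, single_mul_single,
      laurentMonomialHom, neg_add_eq_sub]
  · simp [laurentEmbedding, genericZero]

end SparseGenericZero

end

/-- Lemma lem-prime1: let `S = {P_1,…,P_L}` be generic sparse
Laurent polynomials in `y_1,…,y_m`, `P_l = c_l T_l + Σ_h c_{l,h} T_{l,h}`,
all coefficients independent indeterminates over ℚ, the `T`'s Laurent
monomials.  Set `ε_l := −Σ_h c_{l,h} T_{l,h}/T_l` in `ℚ(c_{l,h}, y_j)`.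
Then the elimination ideal `(S) ∩ ℚ[C]` (the preimage in `ℚ[C]` of the ideal
generated by the `P_l` in `ℚ[C][y^{±}]`) is prime, and `G ∈ (S) ∩ ℚ[C]` iff
`G` vanishes at the generic zero `ε`, i.e. after substituting `ε_l` for `c_l`
and leaving the `c_{l,h}` fixed. -/
theorem elimination_ideal_isPrime_and_generic_zero
    (L m : ℕ) (h : Fin L → ℕ)
    (T : Fin L → (Fin m →₀ ℤ)) (T' : (l : Fin L) → Fin (h l) → (Fin m →₀ ℤ))
    (P : Fin L → AddMonoidAlgebra (CRing L h) (Fin m →₀ ℤ))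
    (hP : ∀ l, P l =
      AddMonoidAlgebra.single (T l) (MvPolynomial.X (Sum.inl l))
        + ∑ k : Fin (h l),
            AddMonoidAlgebra.single (T' l k) (MvPolynomial.X (Sum.inr ⟨l, k⟩)))
    (ψ : MvPolynomial ((Σ l : Fin L, Fin (h l)) ⊕ Fin m) ℚ →+* RatFld L m h)
    (hψ : ψ = algebraMap _ _)
    -- the Laurent monomial `y^e` in the rational function field
    (ym : (Fin m →₀ ℤ) → RatFld L m h)
    (hym : ∀ e, ym e = ∏ j, (ψ (MvPolynomial.X (Sum.inr j))) ^ (e j))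
    (ε : Fin L → RatFld L m h)
    (hε : ∀ l, ε l =
      -∑ k : Fin (h l), ψ (MvPolynomial.X (Sum.inl ⟨l, k⟩)) * ym (T' l k - T l))
    (φ : CRing L h →+* RatFld L m h)
    (hφ : φ = MvPolynomial.eval₂Hom (ψ.comp MvPolynomial.C)
      (Sum.elim (fun l => ε l) (fun c => ψ (MvPolynomial.X (Sum.inl c))))) :
    (Ideal.comap (algebraMap (CRing L h) (AddMonoidAlgebra (CRing L h) (Fin m →₀ ℤ)))
        (Ideal.span (Set.range P))).IsPrime
      ∧ ∀ G : CRing L h,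
        G ∈ Ideal.comap (algebraMap (CRing L h)
            (AddMonoidAlgebra (CRing L h) (Fin m →₀ ℤ)))
          (Ideal.span (Set.range P)) ↔ φ G = 0 := by
  subst hψ
  have hker : Ideal.comap (algebraMap _ _) (Ideal.span (Set.range P)) = RingHom.ker φ := by
    obtain rfl : ym = _ := funext hym
    obtain rfl : ε = _ := funext hε
    have hP' : ∀ l, P l = single (T l) (X (Sum.inl l))
        + AddMonoidAlgebra.mapAlgHom _ (rename Sum.inr) (sparseTail T' l) := fun l => by
      simp [hP, sparseTail]
    rw [hφ, comap_span_eq_ker_genericZero hP', ← laurentEmbedding_comp_genericZero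
      (IsFractionRing.injective _ _), RingHom.ker_comp_of_injective _
      (laurentEmbedding_injective _)]
    rfl
  exact ⟨hker ▸ RingHom.ker_isPrime φ, fun G => by rw [hker, RingHom.mem_ker]⟩
end

section
/- Let Ŝ and Ŝ' be two square matrices over an integral domain R = ℚ[C] which differ only in one column, with Ŝ having column v in position indexed by y^α and suppose there is a nonzero vector g ∈ R^N in the kernel of the matrix M obtained from Ŝ by deleting that column (acting on rows). Then g_1 · det(Ŝ) = γ · (g · v) for some γ ∈ R, where g_1 ≠ 0 is the first coordinate of g. Consequently if r denotes the cofactor expansion coefficients of det(Ŝ) along that column (so det(Ŝ) = r · v), then g_1 · r_k = γ · g_k for all k. -/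
open Finset Matrix

/-- Key lemma: for any matrix `A` whose rows satisfy the kernel condition off
column `c0`, `g 0 * det A` factors through `∑ k, g k * A k c0`, with a factor
depending only on the columns of `A` other than `c0`. -/
private lemma key_det_factor
    {R : Type*} [CommRing R] (n : ℕ)
    (A : Matrix (Fin (n+1)) (Fin (n+1)) R) (c0 : Fin (n+1))
    (g : Fin (n+1) → R)
    (hker : ∀ c : Fin n, ∑ k, g k * A k (c0.succAbove c) = 0) :
    g 0 * A.det
      = ((-1 : R) ^ (c0 : ℕ) * (A.submatrix Fin.succ c0.succAbove).det)
        * (∑ k, g k * A k c0) := by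
  have h1 : (A.updateRow 0 (∑ k, g k • A k)).det = g 0 * A.det := by
    rw [Matrix.det_updateRow_sum, smul_eq_mul]
  set T := A.updateRow 0 (∑ k, g k • A k) with hT
  have hT0 : ∀ j, T 0 j = ∑ k, g k * A k j := by
    intro j
    simp [hT, Matrix.updateRow_self, Finset.sum_apply]
  have hTsub : T.submatrix Fin.succ c0.succAbove = A.submatrix Fin.succ c0.succAbove := by
    ext i j
    simp [hT, Matrix.submatrix_apply, Matrix.updateRow_apply, Fin.succ_ne_zero]
  have h2 : T.det = ((-1 : R) ^ (c0 : ℕ) * (A.submatrix Fin.succ c0.succAbove).det)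
      * (∑ k, g k * A k c0) := by
    rw [Matrix.det_succ_row T 0]
    rw [Finset.sum_eq_single c0]
    · rw [hT0, Fin.succAbove_zero, hTsub]
      simp [Fin.val_zero]
      ring
    · intro j _ hj
      obtain ⟨c, hc⟩ := Fin.exists_succAbove_eq hj
      rw [hT0, ← hc, hker c]
      ring
    · intro h; exact absurd (Finset.mem_univ c0) h
  rw [← h1, h2]

/-- linear-algebra core of Proposition prop-D: Let `S` be an
`(n+1) × (n+1)` matrix over an integral domain `R`, `c0` a distinguished column
index with column `v k = S k c0`, and `M` the matrix obtained from `S` by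
deleting that column.  If `g` is a nonzero vector with `g ⬝ M = 0` (a left-kernel
element, acting on rows) whose first coordinate `g 0` is nonzero, then there is
`γ ∈ R` with `g 0 * det S = γ * (g ⬝ v)`, and moreover, for the cofactors
`r k = (-1)^{k+c0} det(S minor k c0)` of the expansion `det S = Σ_k v k * r k`,
one has `g 0 * r k = γ * g k` for all `k`. -/
theorem kernel_vector_cofactor_proportionality
    {R : Type*} [CommRing R] [IsDomain R] (n : ℕ)
    (S : Matrix (Fin (n+1)) (Fin (n+1)) R) (c0 : Fin (n+1))
    (g : Fin (n+1) → R)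
    (hker : ∀ c : Fin n, ∑ k, g k * S k (c0.succAbove c) = 0)
    (hg : g ≠ 0) (hg0 : g 0 ≠ 0) :
    ∃ γ : R,
      g 0 * S.det = γ * (∑ k, g k * S k c0) ∧
      ∀ k : Fin (n+1),
        g 0 * ((-1 : R) ^ ((k : ℕ) + (c0 : ℕ))
            * (S.submatrix k.succAbove c0.succAbove).det)
          = γ * g k := by
  refine ⟨(-1 : R) ^ (c0 : ℕ) * (S.submatrix Fin.succ c0.succAbove).det,
    key_det_factor n S c0 g hker, ?_⟩
  intro k
  -- apply the key lemma to S with column c0 replaced by the standard basis vector e_k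
  set A := S.updateCol c0 (Pi.single k 1) with hA
  have hAoff : ∀ i j, j ≠ c0 → A i j = S i j := by
    intro i j hj
    simp [hA, Matrix.updateCol_apply, hj]
  have hkerA : ∀ c : Fin n, ∑ k', g k' * A k' (c0.succAbove c) = 0 := by
    intro c
    have := hker c
    rw [← this]
    refine Finset.sum_congr rfl fun i _ => ?_
    rw [hAoff _ _ (Fin.succAbove_ne c0 c)]
  have hsub' : ∀ r : Fin n → Fin (n+1),
      A.submatrix r c0.succAbove = S.submatrix r c0.succAbove := by
    intro r; ext i j
    exact hAoff _ _ (Fin.succAbove_ne c0 j)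
  have hkey := key_det_factor n A c0 g hkerA
  have hsum : (∑ k', g k' * A k' c0) = g k := by
    rw [Finset.sum_eq_single k]
    · simp [hA, Matrix.updateCol_self]
    · intro j _ hj; simp [hA, Matrix.updateCol_self, Pi.single_eq_of_ne hj]
    · intro h; exact absurd (Finset.mem_univ k) h
  have hdetA : A.det = (-1 : R) ^ ((k : ℕ) + (c0 : ℕ))
      * (S.submatrix k.succAbove c0.succAbove).det := by
    rw [Matrix.det_succ_column A c0]
    rw [Finset.sum_eq_single k]
    · rw [hsub' k.succAbove]
      simp [hA, Matrix.updateCol_self]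
    · intro i _ hi
      simp [hA, Matrix.updateCol_self, Pi.single_eq_of_ne hi]
    · intro h; exact absurd (Finset.mem_univ k) h
  rw [← hdetA, hkey, hsub' Fin.succ, hsum]
end
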